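/- Let U ⊆ ℝ² be open and Γ a torsion-free affine connection on U. If K is an affine vector field for Γ, i.e. (ℒ_K Γ)^k_{ij} = 0 on U for all i,j,k, then its complete lift K̃ = Σ_i K^i ∂_{x^i} − Σ_{i,j} ξ_j (∂_i K^j) ∂_{ξ_i} is a Killing vector field for the Walker metric g_W of Γ on U×ℝ², i.e. ℒ_{K̃} g_W = 0. -/

import Mathlib

noncomputable section
open Matrix

/-- Points of the plane. -/
abbrev Pt2 : Type := Fin 2 → ℝ
/-- Points of the 4-manifold `U × ℝ²`, coordinates `(x¹, x², ξ₁, ξ₂)`. -/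
abbrev Pt4 : Type := Fin 4 → ℝ

/-- Partial derivative of a function on the plane. -/
def pd2 (i : Fin 2) (f : Pt2 → ℝ) (x : Pt2) : ℝ := fderiv ℝ f x (Pi.single i 1)
/-- Partial derivative of a function on `ℝ⁴`. -/
def pd4 (a : Fin 4) (f : Pt4 → ℝ) (p : Pt4) : ℝ := fderiv ℝ f p (Pi.single a 1)

/-- Base point `(x¹,x²)` of a point of `U × ℝ²`. -/
def bpt (p : Pt4) : Pt2 := ![p 0, p 1]
/-- Fibre coordinates `(ξ₁,ξ₂)` of a point of `U × ℝ²`. -/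
def fib (p : Pt4) : Fin 2 → ℝ := ![p 2, p 3]

/-- An affine connection: `conn k i j` is the Christoffel symbol `Γ^k_{ij}`. -/
abbrev Conn : Type := Fin 2 → Fin 2 → Fin 2 → Pt2 → ℝ

/-- The Walker metric `g_W = dξ_i⊙dx^i − Γ^k_{ij}ξ_k dx^i⊙dx^j` of a connection, as a
symmetric `4×4` matrix in the coordinates `(x¹,x²,ξ₁,ξ₂)`. -/
def walker (Γ : Conn) (p : Pt4) : Matrix (Fin 4) (Fin 4) ℝ :=
  let A : Fin 2 → Fin 2 → ℝ := fun i j => -(∑ k, Γ k i j (bpt p) * fib p k)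
  !![A 0 0, A 0 1, 1/2, 0;
     A 1 0, A 1 1, 0, 1/2;
     1/2, 0, 0, 0;
     0, 1/2, 0, 0]

/-- Lie derivative `(ℒ_X T)_{ab} = Σ_c (X^c ∂_c T_{ab} + T_{cb} ∂_a X^c + T_{ac} ∂_b X^c)`
of a covariant 2-tensor on an open subset of `ℝ⁴`. -/
def lieT (X : Fin 4 → Pt4 → ℝ) (T : Pt4 → Matrix (Fin 4) (Fin 4) ℝ)
    (a b : Fin 4) (p : Pt4) : ℝ :=
  ∑ c, (X c p * pd4 c (fun q => T q a b) p
    + T p c b * pd4 a (X c) p + T p a c * pd4 b (X c) p)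

/-- Lie derivative of a connection along a vector field `K` on the plane:
`(ℒ_K Γ)^k_{ij} = ∂_i∂_j K^k + Σ_m (K^m ∂_m Γ^k_{ij} − Γ^m_{ij} ∂_m K^k
    + Γ^k_{im} ∂_j K^m + Γ^k_{jm} ∂_i K^m)`. -/
def lieConn (Γ : Conn) (K : Fin 2 → Pt2 → ℝ) (k i j : Fin 2) (x : Pt2) : ℝ :=
  pd2 i (fun y => pd2 j (K k) y) x
    + ∑ m, (K m x * pd2 m (Γ k i j) x - Γ m i j x * pd2 m (K k) x
        + Γ k i m x * pd2 j (K m) x + Γ k j m x * pd2 i (K m) x)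

/-- The complete lift `K̃ = Σ_i K^i ∂_{x^i} − Σ_{i,j} ξ_j (∂_i K^j) ∂_{ξ_i}` of a vector
field on the plane to `U × ℝ²`. -/
def completeLift (K : Fin 2 → Pt2 → ℝ) : Fin 4 → Pt4 → ℝ :=
  ![fun p => K 0 (bpt p),
    fun p => K 1 (bpt p),
    fun p => -(∑ j, fib p j * pd2 0 (K j) (bpt p)),
    fun p => -(∑ j, fib p j * pd2 1 (K j) (bpt p))]

/-! ### Auxiliary lemmas -/

/-- The base-point projection as a continuous linear map. -/
def bptL : Pt4 →L[ℝ] Pt2 :=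
  ContinuousLinearMap.pi ![ContinuousLinearMap.proj 0, ContinuousLinearMap.proj 1]

lemma bpt_eq : bpt = ⇑bptL := by
  funext p i; fin_cases i <;> simp [bpt, bptL]

lemma pd4_comp (f : Pt2 → ℝ) (p : Pt4) (hf : DifferentiableAt ℝ f (bpt p)) (a : Fin 4) :
    pd4 a (fun q => f (bpt q)) p =
      if h : (a : ℕ) < 2 then pd2 ⟨a, h⟩ f (bpt p) else 0 := by
  have h1 : (fun q => f (bpt q)) = f ∘ ⇑bptL := by
    funext q; simp [bpt_eq, Function.comp]
  have h2 : fderiv ℝ (f ∘ ⇑bptL) p = (fderiv ℝ f (bptL p)).comp bptL := by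
    rw [fderiv_comp p (by rw [← bpt_eq]; exact hf) bptL.differentiableAt, bptL.fderiv]
  rw [pd4, h1, h2]
  have hb : bptL p = bpt p := by rw [bpt_eq]
  have z2 : bptL (Pi.single 2 1) = 0 := by funext i; fin_cases i <;> simp [bptL]
  have z3 : bptL (Pi.single 3 1) = 0 := by funext i; fin_cases i <;> simp [bptL]
  fin_cases a
  · simp only [ContinuousLinearMap.comp_apply, hb, pd2]
    norm_num
    congr 1
    funext i; fin_cases i <;> simp [bptL]
  · simp only [ContinuousLinearMap.comp_apply, hb, pd2]
    norm_num
    congr 1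
    funext i; fin_cases i <;> simp [bptL]
  · simp [z2]
  · simp [z3]

lemma pd4_comp0 (f : Pt2 → ℝ) (p : Pt4) (hf : DifferentiableAt ℝ f (bpt p)) :
    pd4 0 (fun q => f (bpt q)) p = pd2 0 f (bpt p) := by
  rw [pd4_comp f p hf 0, dif_pos (by decide)]; rfl

lemma pd4_comp1 (f : Pt2 → ℝ) (p : Pt4) (hf : DifferentiableAt ℝ f (bpt p)) :
    pd4 1 (fun q => f (bpt q)) p = pd2 1 f (bpt p) := by
  rw [pd4_comp f p hf 1, dif_pos (by decide)]; rfl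

lemma pd4_comp2 (f : Pt2 → ℝ) (p : Pt4) (hf : DifferentiableAt ℝ f (bpt p)) :
    pd4 2 (fun q => f (bpt q)) p = 0 := by
  rw [pd4_comp f p hf 2]; exact dif_neg (by decide)

lemma pd4_comp3 (f : Pt2 → ℝ) (p : Pt4) (hf : DifferentiableAt ℝ f (bpt p)) :
    pd4 3 (fun q => f (bpt q)) p = 0 := by
  rw [pd4_comp f p hf 3]; exact dif_neg (by decide)

lemma pd4_coord (a i : Fin 4) (p : Pt4) : pd4 a (fun q => q i) p = if i = a then 1 else 0 := by
  have h : (fun q : Pt4 => q i)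
      = ⇑(ContinuousLinearMap.proj (R := ℝ) (φ := fun _ : Fin 4 => ℝ) i) := rfl
  rw [pd4, h, ContinuousLinearMap.fderiv]
  simp [Pi.single_apply]

lemma pd4_mul (f g : Pt4 → ℝ) (p : Pt4) (hf : DifferentiableAt ℝ f p)
    (hg : DifferentiableAt ℝ g p) (a : Fin 4) :
    pd4 a (fun q => f q * g q) p = pd4 a f p * g p + f p * pd4 a g p := by
  simp only [pd4, fderiv_fun_mul hf hg, ContinuousLinearMap.add_apply,
    ContinuousLinearMap.smul_apply, smul_eq_mul]
  ring

lemma pd4_add (f g : Pt4 → ℝ) (p : Pt4) (hf : DifferentiableAt ℝ f p)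
    (hg : DifferentiableAt ℝ g p) (a : Fin 4) :
    pd4 a (fun q => f q + g q) p = pd4 a f p + pd4 a g p := by
  simp [pd4, fderiv_fun_add hf hg]

lemma pd4_neg (f : Pt4 → ℝ) (p : Pt4) (a : Fin 4) :
    pd4 a (fun q => -(f q)) p = -pd4 a f p := by
  simp [pd4, fderiv_neg]

lemma pd4_const (c : ℝ) (p : Pt4) (a : Fin 4) : pd4 a (fun _ => c) p = 0 := by
  simp [pd4]

lemma contDiffAt_pd2 (f : Pt2 → ℝ) (x : Pt2) (i : Fin 2) (hf : ContDiffAt ℝ (⊤ : ℕ∞) f x) :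
    ContDiffAt ℝ (⊤ : ℕ∞) (pd2 i f) x := by
  have h1 : ContDiffAt ℝ (⊤ : ℕ∞) (fderiv ℝ f) x := hf.fderiv_right (by simp)
  exact h1.clm_apply contDiffAt_const

lemma diff_comp_bpt (f : Pt2 → ℝ) (p : Pt4) (hf : DifferentiableAt ℝ f (bpt p)) :
    DifferentiableAt ℝ (fun q => f (bpt q)) p := by
  have h : (fun q => f (bpt q)) = f ∘ ⇑bptL := by funext q; simp [bpt_eq, Function.comp]
  rw [h]
  have hf' : DifferentiableAt ℝ f (bptL p) := by rw [← bpt_eq]; exact hf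
  exact hf'.comp p bptL.differentiableAt

lemma fin4_mk0 (h : 0 < 4) : (⟨0, h⟩ : Fin 4) = 0 := rfl
lemma fin4_mk1 (h : 1 < 4) : (⟨1, h⟩ : Fin 4) = 1 := rfl
lemma fin4_mk2 (h : 2 < 4) : (⟨2, h⟩ : Fin 4) = 2 := rfl
lemma fin4_mk3 (h : 3 < 4) : (⟨3, h⟩ : Fin 4) = 3 := rfl

set_option maxHeartbeats 1000000 in
/-- The complete lift of an affine vector field (`ℒ_K Γ = 0`) is a Killing vector
field of the Walker metric: `ℒ_{K̃} g_W = 0`. -/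
theorem completeLift_affine_isKilling
    (U : Set Pt2) (hUopen : IsOpen U)
    (Γ : Conn) (hΓsmooth : ∀ k i j, ContDiffOn ℝ (⊤ : ℕ∞) (Γ k i j) U)
    (hΓsym : ∀ k i j, ∀ x ∈ U, Γ k i j x = Γ k j i x)
    (K : Fin 2 → Pt2 → ℝ) (hKsmooth : ∀ i, ContDiffOn ℝ (⊤ : ℕ∞) (K i) U)
    (hKaffine : ∀ k i j, ∀ x ∈ U, lieConn Γ K k i j x = 0)
    (p : Pt4) (hp : bpt p ∈ U) (a b : Fin 4) :
    lieT (completeLift K) (walker Γ) a b p = 0 := by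
  have hnh : U ∈ nhds (bpt p) := hUopen.mem_nhds hp
  have hGc : ∀ k i j, ContDiffAt ℝ (⊤ : ℕ∞) (Γ k i j) (bpt p) :=
    fun k i j => (hΓsmooth k i j).contDiffAt hnh
  have hKc : ∀ j, ContDiffAt ℝ (⊤ : ℕ∞) (K j) (bpt p) := fun j => (hKsmooth j).contDiffAt hnh
  have hdKc : ∀ i j, ContDiffAt ℝ (⊤ : ℕ∞) (pd2 i (K j)) (bpt p) :=
    fun i j => contDiffAt_pd2 _ _ _ (hKc j)
  have hGd : ∀ k i j, DifferentiableAt ℝ (Γ k i j) (bpt p) :=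
    fun k i j => (hGc k i j).differentiableAt (by simp)
  have hKd : ∀ j, DifferentiableAt ℝ (K j) (bpt p) :=
    fun j => (hKc j).differentiableAt (by simp)
  have hdKd : ∀ i j, DifferentiableAt ℝ (pd2 i (K j)) (bpt p) :=
    fun i j => (hdKc i j).differentiableAt (by simp)
  have hGb : ∀ k i j, DifferentiableAt ℝ (fun q => Γ k i j (bpt q)) p :=
    fun k i j => diff_comp_bpt _ _ (hGd k i j)
  have hdKb : ∀ i j, DifferentiableAt ℝ (fun q => pd2 i (K j) (bpt q)) p :=
    fun i j => diff_comp_bpt _ _ (hdKd i j)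
  have hco : ∀ i : Fin 4, DifferentiableAt ℝ (fun q : Pt4 => q i) p :=
    fun i => (ContinuousLinearMap.proj (R := ℝ) (φ := fun _ : Fin 4 => ℝ) i).differentiableAt
  -- derivatives of the metric coefficients
  have hA0 : ∀ i j : Fin 2,
      pd4 0 (fun q => -(Γ 0 i j (bpt q) * q 2 + Γ 1 i j (bpt q) * q 3)) p
        = -(pd2 0 (Γ 0 i j) (bpt p) * p 2 + pd2 0 (Γ 1 i j) (bpt p) * p 3) := by
    intro i j
    rw [pd4_neg, pd4_add (fun q => Γ 0 i j (bpt q) * q 2) (fun q => Γ 1 i j (bpt q) * q 3) _ ((hGb 0 i j).mul (hco 2)) ((hGb 1 i j).mul (hco 3)),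
      pd4_mul _ _ _ (hGb 0 i j) (hco 2), pd4_mul _ _ _ (hGb 1 i j) (hco 3),
      pd4_coord, pd4_coord, pd4_comp0 _ _ (hGd 0 i j), pd4_comp0 _ _ (hGd 1 i j)]
    simp
  have hA1 : ∀ i j : Fin 2,
      pd4 1 (fun q => -(Γ 0 i j (bpt q) * q 2 + Γ 1 i j (bpt q) * q 3)) p
        = -(pd2 1 (Γ 0 i j) (bpt p) * p 2 + pd2 1 (Γ 1 i j) (bpt p) * p 3) := by
    intro i j
    rw [pd4_neg, pd4_add (fun q => Γ 0 i j (bpt q) * q 2) (fun q => Γ 1 i j (bpt q) * q 3) _ ((hGb 0 i j).mul (hco 2)) ((hGb 1 i j).mul (hco 3)),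
      pd4_mul _ _ _ (hGb 0 i j) (hco 2), pd4_mul _ _ _ (hGb 1 i j) (hco 3),
      pd4_coord, pd4_coord, pd4_comp1 _ _ (hGd 0 i j), pd4_comp1 _ _ (hGd 1 i j)]
    simp
  have hA2 : ∀ i j : Fin 2,
      pd4 2 (fun q => -(Γ 0 i j (bpt q) * q 2 + Γ 1 i j (bpt q) * q 3)) p
        = -(Γ 0 i j (bpt p)) := by
    intro i j
    rw [pd4_neg, pd4_add (fun q => Γ 0 i j (bpt q) * q 2) (fun q => Γ 1 i j (bpt q) * q 3) _ ((hGb 0 i j).mul (hco 2)) ((hGb 1 i j).mul (hco 3)),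
      pd4_mul _ _ _ (hGb 0 i j) (hco 2), pd4_mul _ _ _ (hGb 1 i j) (hco 3),
      pd4_coord, pd4_coord, pd4_comp2 _ _ (hGd 0 i j), pd4_comp2 _ _ (hGd 1 i j)]
    simp
  have hA3 : ∀ i j : Fin 2,
      pd4 3 (fun q => -(Γ 0 i j (bpt q) * q 2 + Γ 1 i j (bpt q) * q 3)) p
        = -(Γ 1 i j (bpt p)) := by
    intro i j
    rw [pd4_neg, pd4_add (fun q => Γ 0 i j (bpt q) * q 2) (fun q => Γ 1 i j (bpt q) * q 3) _ ((hGb 0 i j).mul (hco 2)) ((hGb 1 i j).mul (hco 3)),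
      pd4_mul _ _ _ (hGb 0 i j) (hco 2), pd4_mul _ _ _ (hGb 1 i j) (hco 3),
      pd4_coord, pd4_coord, pd4_comp3 _ _ (hGd 0 i j), pd4_comp3 _ _ (hGd 1 i j)]
    simp
  -- derivatives of the horizontal lift components
  have hXK0 : ∀ j : Fin 2, pd4 0 (fun q => K j (bpt q)) p = pd2 0 (K j) (bpt p) :=
    fun j => pd4_comp0 _ _ (hKd j)
  have hXK1 : ∀ j : Fin 2, pd4 1 (fun q => K j (bpt q)) p = pd2 1 (K j) (bpt p) :=
    fun j => pd4_comp1 _ _ (hKd j)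
  have hXK2 : ∀ j : Fin 2, pd4 2 (fun q => K j (bpt q)) p = 0 :=
    fun j => pd4_comp2 _ _ (hKd j)
  have hXK3 : ∀ j : Fin 2, pd4 3 (fun q => K j (bpt q)) p = 0 :=
    fun j => pd4_comp3 _ _ (hKd j)
  -- derivatives of the vertical lift components
  have hXl0 : ∀ i : Fin 2,
      pd4 0 (fun q => -(q 2 * pd2 i (K 0) (bpt q) + q 3 * pd2 i (K 1) (bpt q))) p
        = -(p 2 * pd2 0 (pd2 i (K 0)) (bpt p) + p 3 * pd2 0 (pd2 i (K 1)) (bpt p)) := by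
    intro i
    rw [pd4_neg, pd4_add (fun q => q 2 * pd2 i (K 0) (bpt q)) (fun q => q 3 * pd2 i (K 1) (bpt q)) _ ((hco 2).mul (hdKb i 0)) ((hco 3).mul (hdKb i 1)),
      pd4_mul _ _ _ (hco 2) (hdKb i 0), pd4_mul _ _ _ (hco 3) (hdKb i 1),
      pd4_coord, pd4_coord, pd4_comp0 _ _ (hdKd i 0), pd4_comp0 _ _ (hdKd i 1)]
    simp
  have hXl1 : ∀ i : Fin 2,
      pd4 1 (fun q => -(q 2 * pd2 i (K 0) (bpt q) + q 3 * pd2 i (K 1) (bpt q))) p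
        = -(p 2 * pd2 1 (pd2 i (K 0)) (bpt p) + p 3 * pd2 1 (pd2 i (K 1)) (bpt p)) := by
    intro i
    rw [pd4_neg, pd4_add (fun q => q 2 * pd2 i (K 0) (bpt q)) (fun q => q 3 * pd2 i (K 1) (bpt q)) _ ((hco 2).mul (hdKb i 0)) ((hco 3).mul (hdKb i 1)),
      pd4_mul _ _ _ (hco 2) (hdKb i 0), pd4_mul _ _ _ (hco 3) (hdKb i 1),
      pd4_coord, pd4_coord, pd4_comp1 _ _ (hdKd i 0), pd4_comp1 _ _ (hdKd i 1)]
    simp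
  have hXl2 : ∀ i : Fin 2,
      pd4 2 (fun q => -(q 2 * pd2 i (K 0) (bpt q) + q 3 * pd2 i (K 1) (bpt q))) p
        = -(pd2 i (K 0) (bpt p)) := by
    intro i
    rw [pd4_neg, pd4_add (fun q => q 2 * pd2 i (K 0) (bpt q)) (fun q => q 3 * pd2 i (K 1) (bpt q)) _ ((hco 2).mul (hdKb i 0)) ((hco 3).mul (hdKb i 1)),
      pd4_mul _ _ _ (hco 2) (hdKb i 0), pd4_mul _ _ _ (hco 3) (hdKb i 1),
      pd4_coord, pd4_coord, pd4_comp2 _ _ (hdKd i 0), pd4_comp2 _ _ (hdKd i 1)]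
    simp
  have hXl3 : ∀ i : Fin 2,
      pd4 3 (fun q => -(q 2 * pd2 i (K 0) (bpt q) + q 3 * pd2 i (K 1) (bpt q))) p
        = -(pd2 i (K 1) (bpt p)) := by
    intro i
    rw [pd4_neg, pd4_add (fun q => q 2 * pd2 i (K 0) (bpt q)) (fun q => q 3 * pd2 i (K 1) (bpt q)) _ ((hco 2).mul (hdKb i 0)) ((hco 3).mul (hdKb i 1)),
      pd4_mul _ _ _ (hco 2) (hdKb i 0), pd4_mul _ _ _ (hco 3) (hdKb i 1),
      pd4_coord, pd4_coord, pd4_comp3 _ _ (hdKd i 0), pd4_comp3 _ _ (hdKd i 1)]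
    simp
  -- symmetry of the connection at the point and of its derivative
  have hsym' : ∀ k i j : Fin 2, Γ k i j (bpt p) = Γ k j i (bpt p) :=
    fun k i j => hΓsym k i j _ hp
  have hdsym : ∀ (m k i j : Fin 2), pd2 m (Γ k i j) (bpt p) = pd2 m (Γ k j i) (bpt p) := by
    intro m k i j
    have h : Γ k i j =ᶠ[nhds (bpt p)] Γ k j i :=
      Filter.eventuallyEq_of_mem hnh (fun y hy => hΓsym k i j y hy)
    rw [pd2, pd2, h.fderiv_eq]
  -- the affine condition, expanded
  have E : ∀ k i j : Fin 2,
      pd2 i (fun y => pd2 j (K k) y) (bpt p)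
        + (K 0 (bpt p) * pd2 0 (Γ k i j) (bpt p) - Γ 0 i j (bpt p) * pd2 0 (K k) (bpt p)
          + Γ k i 0 (bpt p) * pd2 j (K 0) (bpt p) + Γ k j 0 (bpt p) * pd2 i (K 0) (bpt p))
        + (K 1 (bpt p) * pd2 1 (Γ k i j) (bpt p) - Γ 1 i j (bpt p) * pd2 1 (K k) (bpt p)
          + Γ k i 1 (bpt p) * pd2 j (K 1) (bpt p) + Γ k j 1 (bpt p) * pd2 i (K 1) (bpt p)) = 0 := by
    intro k i j
    have h := hKaffine k i j _ hp
    simp only [lieConn, Fin.sum_univ_two] at h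
    linear_combination h
  -- normalized versions (all Γ lower indices sorted) of the affine condition at (1,0), (0,1)
  have ES : ∀ k : Fin 2,
      pd2 1 (fun y => pd2 0 (K k) y) (bpt p)
        + (K 0 (bpt p) * pd2 0 (Γ k 0 1) (bpt p) - Γ 0 0 1 (bpt p) * pd2 0 (K k) (bpt p)
          + Γ k 0 1 (bpt p) * pd2 0 (K 0) (bpt p) + Γ k 0 0 (bpt p) * pd2 1 (K 0) (bpt p))
        + (K 1 (bpt p) * pd2 1 (Γ k 0 1) (bpt p) - Γ 1 0 1 (bpt p) * pd2 1 (K k) (bpt p)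
          + Γ k 1 1 (bpt p) * pd2 0 (K 1) (bpt p) + Γ k 0 1 (bpt p) * pd2 1 (K 1) (bpt p)) = 0 := by
    intro k
    have h := E k 1 0
    rw [hsym' 0 1 0, hsym' 1 1 0, hsym' k 1 0, hdsym 0 k 1 0, hdsym 1 k 1 0] at h
    linear_combination h
  have ES2 : ∀ k : Fin 2,
      pd2 0 (fun y => pd2 1 (K k) y) (bpt p)
        + (K 0 (bpt p) * pd2 0 (Γ k 0 1) (bpt p) - Γ 0 0 1 (bpt p) * pd2 0 (K k) (bpt p)
          + Γ k 0 0 (bpt p) * pd2 1 (K 0) (bpt p) + Γ k 0 1 (bpt p) * pd2 0 (K 0) (bpt p))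
        + (K 1 (bpt p) * pd2 1 (Γ k 0 1) (bpt p) - Γ 1 0 1 (bpt p) * pd2 1 (K k) (bpt p)
          + Γ k 0 1 (bpt p) * pd2 1 (K 1) (bpt p) + Γ k 1 1 (bpt p) * pd2 0 (K 1) (bpt p)) = 0 := by
    intro k
    have h := E k 0 1
    rw [hsym' k 1 0] at h
    linear_combination h
  have ES3 : ∀ k : Fin 2,
      pd2 1 (fun y => pd2 1 (K k) y) (bpt p)
        + (K 0 (bpt p) * pd2 0 (Γ k 1 1) (bpt p) - Γ 0 1 1 (bpt p) * pd2 0 (K k) (bpt p)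
          + Γ k 0 1 (bpt p) * pd2 1 (K 0) (bpt p) + Γ k 0 1 (bpt p) * pd2 1 (K 0) (bpt p))
        + (K 1 (bpt p) * pd2 1 (Γ k 1 1) (bpt p) - Γ 1 1 1 (bpt p) * pd2 1 (K k) (bpt p)
          + Γ k 1 1 (bpt p) * pd2 1 (K 1) (bpt p) + Γ k 1 1 (bpt p) * pd2 1 (K 1) (bpt p)) = 0 := by
    intro k
    have h := E k 1 1
    rw [hsym' k 1 0] at h
    linear_combination h
  fin_cases a <;> fin_cases b <;>
    simp only [fin4_mk0, fin4_mk1, fin4_mk2, fin4_mk3] <;>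
    simp only [lieT, Fin.sum_univ_four, walker, completeLift, fib, Fin.sum_univ_two,
      Matrix.cons_val', Matrix.cons_val_zero, Matrix.cons_val_one, Matrix.head_cons,
      Matrix.empty_val', Matrix.cons_val_fin_one, Matrix.head_fin_const, Matrix.of_apply,
      Matrix.cons_val_two, Matrix.cons_val_three, Matrix.tail_cons,
      hA0, hA1, hA2, hA3, hXK0, hXK1, hXK2, hXK3, hXl0, hXl1, hXl2, hXl3, pd4_const] <;>
    (try simp only [hsym' 0 1 0, hsym' 1 1 0, hdsym 0 0 1 0, hdsym 1 0 1 0, hdsym 0 1 1 0,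
      hdsym 1 1 1 0])
  · linear_combination (-(p 2)) * E 0 0 0 + (-(p 3)) * E 1 0 0
  · linear_combination (-(p 2)/2) * (ES2 0 + ES 0) + (-(p 3)/2) * (ES2 1 + ES 1)
  · ring
  · ring
  · linear_combination (-(p 2)/2) * (ES2 0 + ES 0) + (-(p 3)/2) * (ES2 1 + ES 1)
  · linear_combination (-(p 2)) * ES3 0 + (-(p 3)) * ES3 1
  · ring
  · ring
  · ring
  · ring
  · ring
  · ring
  · ring
  · ring
  · ring
  · ring
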